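/- Classical core of Klein's inequality. Let d ∈ ℕ, let p and q be probability vectors on Fin d with q k > 0 for all k, and let P : Matrix (Fin d) (Fin d) ℝ have nonnegative entries with every row summing to 1 and every column summing to 1 (P is doubly stochastic). Then ∑ j, p j · log (p j) − ∑ j, ∑ k, p j · P j k · log (q k) ≥ 0. -/

import Mathlib

/-!
Weighting the pointwise Gibbs bound `a - b ≤ a log a - a log b` by `p j * P j k` and summing,
the row sums of `P` turn the right side into `∑ p log p - ∑ p P log q`, while the left side
collapses, through the row and column sums, to `∑ p - ∑ q = 0`.
-/

open Real Finset Matrix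

theorem sub_le_mul_log_sub_mul_log {a b : ℝ} (ha : 0 ≤ a) (hb : 0 < b) :
    a - b ≤ a * log a - a * log b := by
  rcases ha.eq_or_lt with rfl | ha
  · simpa using hb.le
  · have h := mul_le_mul_of_nonneg_left (log_le_sub_one_of_pos (div_pos hb ha)) ha.le
    rw [log_div hb.ne' ha.ne', mul_sub_one, mul_div_cancel₀ _ ha.ne'] at h
    linarith

section DoublyStochastic

variable {n : Type*} [Fintype n] [DecidableEq n] {P : Matrix n n ℝ}

theorem sum_sum_mul_sub_of_mem_doublyStochastic (hP : P ∈ doublyStochastic ℝ n) (p q : n → ℝ) :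
    ∑ j, ∑ k, P j k * (p j - q k) = ∑ j, p j - ∑ k, q k := by
  simp only [mul_sub, sum_sub_distrib]
  rw [sum_comm (f := fun j k => P j k * q k)]
  simp only [← sum_mul, sum_row_of_mem_doublyStochastic hP, sum_col_of_mem_doublyStochastic hP,
    one_mul]

theorem sum_sum_mul_log_le_sum_mul_log (hP : P ∈ doublyStochastic ℝ n) {p q : n → ℝ}
    (hp : ∀ j, 0 ≤ p j) (hq : ∀ k, 0 < q k) (hpq : ∑ k, q k ≤ ∑ j, p j) :
    ∑ j, ∑ k, p j * P j k * log (q k) ≤ ∑ j, p j * log (p j) :=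
  calc ∑ j, ∑ k, p j * P j k * log (q k)
      ≤ ∑ j, ∑ k, P j k * (p j - q k) + ∑ j, ∑ k, p j * P j k * log (q k) := by
        rw [sum_sum_mul_sub_of_mem_doublyStochastic hP]
        linarith
    _ = ∑ j, ∑ k, P j k * (p j - q k + p j * log (q k)) := by
        simp only [← sum_add_distrib]
        exact sum_congr rfl fun j _ => sum_congr rfl fun k _ => by ring
    _ ≤ ∑ j, ∑ k, P j k * (p j * log (p j)) := by
        gcongr with j _ k _
        · exact nonneg_of_mem_doublyStochastic hP
        · linarith [sub_le_mul_log_sub_mul_log (hp j) (hq k)]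
    _ = ∑ j, p j * log (p j) := by
        simp only [← sum_mul, sum_row_of_mem_doublyStochastic hP, one_mul]

end DoublyStochastic

/-- Classical core of Klein's inequality: for probability vectors `p`, `q`
with `q` strictly positive, and a doubly stochastic matrix `P`,
`∑ j, p j · log (p j) − ∑ j ∑ k, p j · P j k · log (q k) ≥ 0`. -/
theorem classical_klein_inequality
    (d : ℕ) (p q : Fin d → ℝ)
    (hp : ∀ j, 0 ≤ p j) (hp1 : (∑ j, p j) = 1)
    (hq : ∀ k, 0 < q k) (hq1 : (∑ k, q k) = 1)
    (P : Matrix (Fin d) (Fin d) ℝ)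
    (hP : ∀ j k, 0 ≤ P j k)
    (hrow : ∀ j, (∑ k, P j k) = 1)
    (hcol : ∀ k, (∑ j, P j k) = 1) :
    (∑ j, p j * Real.log (p j))
      - (∑ j, ∑ k, p j * P j k * Real.log (q k)) ≥ 0 := by
  have hPds : P ∈ doublyStochastic ℝ (Fin d) :=
    mem_doublyStochastic_iff_sum.2 ⟨hP, hrow, hcol⟩
  have := sum_sum_mul_log_le_sum_mul_log hPds hp hq (by rw [hp1, hq1])
  linarith
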